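/- Let n ≥ 3 and let P be an edge-probability matrix on n nodes with p̄(P) > 0. If there exists an admissible community assignment c with γ(c,P) < 0 (equivalently, p̄_in(c,P) < p̄_out(c,P)), then there exists an admissible community assignment c' with γ(c',P) > 0 (equivalently, p̄_in(c',P) > p̄_out(c',P)). -/

import Mathlib

open Finset

/-- The set of unordered pairs of distinct nodes, represented as ordered pairs `(i, j)`
with `i < j`. -/
def allPairs (n : ℕ) : Finset (Fin n × Fin n) :=
  Finset.univ.filter (fun p => p.1 < p.2)

/-- Intra-community pairs of the community assignment `c`. -/
def pairsIn {n K : ℕ} (c : Fin n → Fin K) : Finset (Fin n × Fin n) :=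
  Finset.univ.filter (fun p => p.1 < p.2 ∧ c p.1 = c p.2)

/-- Inter-community pairs of the community assignment `c`. -/
def pairsOut {n K : ℕ} (c : Fin n → Fin K) : Finset (Fin n × Fin n) :=
  Finset.univ.filter (fun p => p.1 < p.2 ∧ c p.1 ≠ c p.2)

/-- Arithmetic mean of `P i j` over a finite set of pairs. -/
noncomputable def meanOver {n : ℕ} (S : Finset (Fin n × Fin n))
    (P : Fin n → Fin n → ℝ) : ℝ :=
  (∑ p ∈ S, P p.1 p.2) / S.card

/-- `p̄(P)`: mean edge probability over all pairs of distinct nodes. -/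
noncomputable def pbar {n : ℕ} (P : Fin n → Fin n → ℝ) : ℝ :=
  meanOver (allPairs n) P

/-- `p̄_in(c, P)`: mean edge probability over intra-community pairs. -/
noncomputable def pbarIn {n K : ℕ} (c : Fin n → Fin K) (P : Fin n → Fin n → ℝ) : ℝ :=
  meanOver (pairsIn c) P

/-- `p̄_out(c, P)`: mean edge probability over inter-community pairs. -/
noncomputable def pbarOut {n K : ℕ} (c : Fin n → Fin K) (P : Fin n → Fin n → ℝ) : ℝ :=
  meanOver (pairsOut c) P

/-- The homophily parameter `γ(c, P)`. -/
noncomputable def gamma {n K : ℕ} (c : Fin n → Fin K) (P : Fin n → Fin n → ℝ) : ℝ :=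
  (pbarIn c P - pbarOut c P) / pbar P

/-- An edge-probability matrix: symmetric, zero diagonal, entries in `[0,1]` off the
diagonal. -/
def IsEdgeProbMatrix {n : ℕ} (P : Fin n → Fin n → ℝ) : Prop :=
  (∀ i j, P i j = P j i) ∧ (∀ i, P i i = 0) ∧
    (∀ i j, i ≠ j → 0 ≤ P i j ∧ P i j ≤ 1)

/-- A community assignment is admissible if some community contains at least two nodes
and at least two communities are nonempty. -/
def Admissible {n K : ℕ} (c : Fin n → Fin K) : Prop :=
  (∃ i j : Fin n, i ≠ j ∧ c i = c j) ∧ (∃ i j : Fin n, c i ≠ c j)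


/-!
Take a pair `m = (i, j)` on which `P` is maximal, and let `c'` merge `j` into `i` while keeping
every other node in a community of its own. Then `(i, j)` is the only intra-community pair, so
`p̄_in(c', P) = P i j`, while `p̄_out(c', P)` averages the remaining pairs. If `P` were constant on
pairs, every admissible assignment would have `p̄_in = p̄_out`; so some pair lies strictly below the
maximum and `p̄_out(c', P) < P i j`.
-/

variable {n K : ℕ}

section Mean

variable {S : Finset (Fin n × Fin n)} {P : Fin n → Fin n → ℝ} {M : ℝ}

lemma meanOver_eq_of_forall_eq (hS : S.Nonempty) (h : ∀ p ∈ S, P p.1 p.2 = M) :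
    meanOver S P = M := by
  rw [meanOver, sum_congr rfl h, sum_const, nsmul_eq_mul]
  exact mul_div_cancel_left₀ M (Nat.cast_ne_zero.mpr hS.card_pos.ne')

lemma meanOver_lt_of_forall_le_of_exists_lt (hle : ∀ p ∈ S, P p.1 p.2 ≤ M)
    (hlt : ∃ p ∈ S, P p.1 p.2 < M) : meanOver S P < M := by
  obtain ⟨r, hr, -⟩ := id hlt
  rw [meanOver, div_lt_iff₀ (Nat.cast_pos.mpr (card_pos.mpr ⟨r, hr⟩))]
  calc ∑ p ∈ S, P p.1 p.2 < ∑ _p ∈ S, M := sum_lt_sum hle hlt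
    _ = M * S.card := by rw [sum_const, nsmul_eq_mul, mul_comm]

end Mean

lemma mem_allPairs {p : Fin n × Fin n} : p ∈ allPairs n ↔ p.1 < p.2 := by
  simp [allPairs]

lemma pairsIn_subset_allPairs (c : Fin n → Fin K) : pairsIn c ⊆ allPairs n := fun p hp => by
  simp only [pairsIn, mem_filter, mem_univ, true_and] at hp
  exact mem_allPairs.mpr hp.1

lemma pairsOut_eq_allPairs_sdiff_pairsIn (c : Fin n → Fin K) :
    pairsOut c = allPairs n \ pairsIn c := by
  ext p
  simp only [pairsOut, pairsIn, allPairs, mem_filter, mem_sdiff, mem_univ, true_and]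
  tauto

lemma pairsOut_subset_allPairs (c : Fin n → Fin K) : pairsOut c ⊆ allPairs n :=
  pairsOut_eq_allPairs_sdiff_pairsIn c ▸ sdiff_subset

lemma exists_lt_of_ne_of_symm {r : Fin n → Fin n → Prop} (hr : ∀ a b, r a b → r b a)
    {a b : Fin n} (hab : a ≠ b) (h : r a b) : ∃ i j : Fin n, i < j ∧ r i j := by
  rcases hab.lt_or_gt with hlt | hlt
  · exact ⟨a, b, hlt, h⟩
  · exact ⟨b, a, hlt, hr a b h⟩

namespace Admissible

variable {c : Fin n → Fin K} (hc : Admissible c)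
include hc

lemma pairsIn_nonempty : (pairsIn c).Nonempty := by
  obtain ⟨a, b, hab, hcab⟩ := hc.1
  obtain ⟨i, j, hij, hcij⟩ := exists_lt_of_ne_of_symm (r := fun i j => c i = c j)
    (fun _ _ => Eq.symm) hab hcab
  exact ⟨(i, j), by simp [pairsIn, hij, hcij]⟩

lemma pairsOut_nonempty : (pairsOut c).Nonempty := by
  obtain ⟨a, b, hcab⟩ := hc.2
  have hab : a ≠ b := fun h => hcab (congrArg c h)
  obtain ⟨i, j, hij, hcij⟩ := exists_lt_of_ne_of_symm (r := fun i j => c i ≠ c j)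
    (fun _ _ => Ne.symm) hab hcab
  exact ⟨(i, j), by simp [pairsOut, hij, hcij]⟩

lemma pbarIn_eq_pbarOut_of_forall_eq {P : Fin n → Fin n → ℝ} {M : ℝ}
    (hP : ∀ p ∈ allPairs n, P p.1 p.2 = M) : pbarIn c P = pbarOut c P := by
  rw [pbarIn, pbarOut,
    meanOver_eq_of_forall_eq hc.pairsIn_nonempty fun p hp => hP p (pairsIn_subset_allPairs c hp),
    meanOver_eq_of_forall_eq hc.pairsOut_nonempty fun p hp => hP p (pairsOut_subset_allPairs c hp)]

end Admissible

def mergeNodes (i j : Fin n) : Fin n → Fin n := fun x => if x = j then i else x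

section Merge

variable {i j : Fin n}

lemma mergeNodes_eq_iff (hij : i < j) {x y : Fin n} (hxy : x < y) :
    mergeNodes i j x = mergeNodes i j y ↔ (x, y) = (i, j) := by
  simp only [mergeNodes, Prod.mk.injEq]
  split_ifs <;> omega

lemma pairsIn_mergeNodes (hij : i < j) : pairsIn (mergeNodes i j) = {(i, j)} := by
  ext p
  simp only [pairsIn, mem_filter, mem_univ, true_and, mem_singleton]
  constructor
  · rintro ⟨hp, heq⟩
    exact (mergeNodes_eq_iff hij hp).mp heq
  · rintro rfl
    exact ⟨hij, (mergeNodes_eq_iff hij hij).mpr rfl⟩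

lemma admissible_mergeNodes (hn : 3 ≤ n) (hij : i < j) : Admissible (mergeNodes i j) := by
  have hcard : #{i, j} < #(univ : Finset (Fin n)) := by
    rw [card_univ, Fintype.card_fin]
    exact card_le_two.trans_lt hn
  obtain ⟨k, -, hk⟩ := exists_mem_notMem_of_card_lt_card hcard
  simp only [mem_insert, mem_singleton, not_or] at hk
  refine ⟨⟨i, j, hij.ne, by simp [mergeNodes]⟩, ⟨k, j, ?_⟩⟩
  simp [mergeNodes, hk.1, hk.2]

lemma pbarOut_lt_pbarIn_mergeNodes {P : Fin n → Fin n → ℝ} {m : Fin n × Fin n}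
    (hm : m ∈ allPairs n) (hmax : ∀ p ∈ allPairs n, P p.1 p.2 ≤ P m.1 m.2)
    (hlt : ∃ r ∈ allPairs n, P r.1 r.2 < P m.1 m.2) :
    pbarOut (mergeNodes m.1 m.2) P < pbarIn (mergeNodes m.1 m.2) P := by
  have hin := pairsIn_mergeNodes (mem_allPairs.mp hm)
  rw [pbarIn, hin, meanOver_eq_of_forall_eq (M := P m.1 m.2) (singleton_nonempty _) (by simp),
    pbarOut, pairsOut_eq_allPairs_sdiff_pairsIn, hin]
  obtain ⟨r, hr, hPr⟩ := hlt
  refine meanOver_lt_of_forall_le_of_exists_lt (fun p hp => hmax p (mem_sdiff.mp hp).1)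
    ⟨r, mem_sdiff.mpr ⟨hr, ?_⟩, hPr⟩
  rintro hrm
  rw [mem_singleton.mp hrm] at hPr
  exact hPr.false

end Merge

theorem negative_homophily_implies_positive_homophily_general (n : ℕ) (hn : 3 ≤ n)
    (P : Fin n → Fin n → ℝ) (hp : 0 < pbar P)
    (h : ∃ (K : ℕ) (c : Fin n → Fin K), 1 ≤ K ∧ Admissible c ∧
      gamma c P < 0 ∧ pbarIn c P < pbarOut c P) :
    ∃ (K' : ℕ) (c' : Fin n → Fin K'), 1 ≤ K' ∧ Admissible c' ∧
      0 < gamma c' P ∧ pbarOut c' P < pbarIn c' P := by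
  obtain ⟨K, c, -, hc, -, hlt⟩ := h
  obtain ⟨m, hm, hmax⟩ := (allPairs n).exists_max_image (fun p => P p.1 p.2)
    (hc.pairsIn_nonempty.mono (pairsIn_subset_allPairs c))
  have hbelow : ∃ r ∈ allPairs n, P r.1 r.2 < P m.1 m.2 := by
    by_contra! hconst
    exact hlt.ne (hc.pbarIn_eq_pbarOut_of_forall_eq
      fun p hp => le_antisymm (hmax p hp) (hconst p hp))
  have hmerge := pbarOut_lt_pbarIn_mergeNodes hm hmax hbelow
  exact ⟨n, mergeNodes m.1 m.2, by omega, admissible_mergeNodes hn (mem_allPairs.mp hm),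
    div_pos (sub_pos.mpr hmerge) hp, hmerge⟩

/-- For `n ≥ 3` and an edge-probability matrix `P` with `p̄(P) > 0`,
if some admissible community assignment has `γ(c,P) < 0` (equivalently
`p̄_in < p̄_out`), then some admissible community assignment has `γ(c',P) > 0`
(equivalently `p̄_in > p̄_out`). -/
theorem negative_homophily_implies_positive_homophily (n : ℕ) (hn : 3 ≤ n)
    (P : Fin n → Fin n → ℝ) (hP : IsEdgeProbMatrix P) (hp : 0 < pbar P)
    (h : ∃ (K : ℕ) (c : Fin n → Fin K), 1 ≤ K ∧ Admissible c ∧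
      gamma c P < 0 ∧ pbarIn c P < pbarOut c P) :
    ∃ (K' : ℕ) (c' : Fin n → Fin K'), 1 ≤ K' ∧ Admissible c' ∧
      0 < gamma c' P ∧ pbarOut c' P < pbarIn c' P :=
  negative_homophily_implies_positive_homophily_general n hn P hp h
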